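/- Let S be a numerical semigroup minimally generated by n_1 < ... < n_b. Let x = ∑_{i=1}^b r_i n_i ∈ T be a maximal expression with x + c·n_1 = ∑_{i=1}^b s_i n_i a maximal expression satisfying ord(x + c·n_1) > ord(x) + c. If r_j ≠ 0 and s_j ≠ 0 for some j, then x' = x − n_j is also in T with tord(x') ≤ c. -/
import Mathlib


open Finset

/-- Membership in the numerical semigroup generated by `n`. -/
def memS {b : ℕ} (n : Fin b → ℕ) (s : ℕ) : Prop :=
  ∃ r : Fin b → ℕ, ∑ i, r i * n i = s

/-- The order of `s`: the largest number of generators (with repetition) summing to `s`. -/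
noncomputable def ord {b : ℕ} (n : Fin b → ℕ) (s : ℕ) : ℕ :=
  sSup {k | ∃ r : Fin b → ℕ, (∑ i, r i * n i = s) ∧ ∑ i, r i = k}

/-- `r` is a maximal expression of `s`. -/
def IsMaxExpr {b : ℕ} (n : Fin b → ℕ) (s : ℕ) (r : Fin b → ℕ) : Prop :=
  (∑ i, r i * n i = s) ∧ ∑ i, r i = ord n s

/-- `s` is a torsion element: `ord (s + c·n₁) > ord s + c` for some `c > 0`. -/
def Torsion {b : ℕ} [NeZero b] (n : Fin b → ℕ) (s : ℕ) : Prop :=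
  ∃ c, 0 < c ∧ ord n s + c < ord n (s + c * n 0)

/-- The torsion order: least `c > 0` with `ord (s + c·n₁) > ord s + c`. -/
noncomputable def tord {b : ℕ} [NeZero b] (n : Fin b → ℕ) (s : ℕ) : ℕ :=
  sInf {c | 0 < c ∧ ord n s + c < ord n (s + c * n 0)}

/-- `n` is a minimal system of generators of a numerical semigroup,
listed increasingly. -/
def MinGen {b : ℕ} (n : Fin b → ℕ) : Prop :=
  StrictMono n ∧ (∀ i, 1 < n i) ∧ Finset.univ.gcd n = 1 ∧
  ∀ i, ¬ ∃ r : Fin b → ℕ, r i = 0 ∧ ∑ j, r j * n j = n i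

/-- The Apéry set of the semigroup generated by `n` with respect to `ν`. -/
def Ap {b : ℕ} (n : Fin b → ℕ) (ν : ℕ) : Set ℕ :=
  {s | memS n s ∧ ¬ ∃ t, memS n t ∧ t + ν = s}

/-- The `k`-fold sumset `kM` of the maximal ideal `M = S \ {0}`:
the elements of order at least `k`. -/
def powM {b : ℕ} (n : Fin b → ℕ) (k : ℕ) : Set ℕ :=
  {s | ∃ r : Fin b → ℕ, k ≤ ∑ i, r i ∧ ∑ i, r i * n i = s}

/-- The reduction number: least `r` with `(r+1)M = n₁ + rM`. -/
noncomputable def redNum {b : ℕ} [NeZero b] (n : Fin b → ℕ) : ℕ :=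
  sInf {r | powM n (r + 1) = (fun t => n 0 + t) '' powM n r}


section Aux
variable {b : ℕ} (n : Fin b → ℕ)

lemma update_mul_eq (f g : Fin b → ℕ) (j : Fin b) (v : ℕ) :
    (fun i => Function.update f j v i * g i)
      = Function.update (fun i => f i * g i) j (v * g j) := by
  funext i
  by_cases h : i = j
  · subst h; simp
  · simp [Function.update_of_ne h]

lemma sum_update_mul (f g : Fin b → ℕ) (j : Fin b) (v : ℕ) :
    ∑ i, Function.update f j v i * g i
      = v * g j + ∑ i ∈ Finset.univ.erase j, f i * g i := by
  rw [update_mul_eq]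
  rw [Finset.sum_update_of_mem (Finset.mem_univ j)]
  simp [Finset.sdiff_singleton_eq_erase]

lemma sum_update (f : Fin b → ℕ) (j : Fin b) (v : ℕ) :
    ∑ i, Function.update f j v i = v + ∑ i ∈ Finset.univ.erase j, f i := by
  rw [Finset.sum_update_of_mem (Finset.mem_univ j)]
  simp [Finset.sdiff_singleton_eq_erase]

lemma sum_split (f : Fin b → ℕ) (j : Fin b) :
    ∑ i, f i = f j + ∑ i ∈ Finset.univ.erase j, f i :=
  (Finset.add_sum_erase _ f (Finset.mem_univ j)).symm

lemma ordSet_bdd (hn : ∀ i, 0 < n i) (s : ℕ) :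
    BddAbove {k | ∃ r : Fin b → ℕ, (∑ i, r i * n i = s) ∧ ∑ i, r i = k} := by
  refine ⟨s, fun k hk => ?_⟩
  obtain ⟨r, hr1, hr2⟩ := hk
  calc k = ∑ i, r i := hr2.symm
    _ ≤ ∑ i, r i * n i := Finset.sum_le_sum fun i _ => Nat.le_mul_of_pos_right _ (hn i)
    _ = s := hr1

lemma le_ord (hn : ∀ i, 0 < n i) (s : ℕ) (r : Fin b → ℕ) (hr : ∑ i, r i * n i = s) :
    ∑ i, r i ≤ ord n s :=
  le_csSup (ordSet_bdd n hn s) ⟨r, hr, rfl⟩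

lemma ord_mem (hn : ∀ i, 0 < n i) (s : ℕ) (r : Fin b → ℕ) (hr : ∑ i, r i * n i = s) :
    ∃ t : Fin b → ℕ, (∑ i, t i * n i = s) ∧ ∑ i, t i = ord n s := by
  have h : (∑ i, r i) ∈ {k | ∃ r : Fin b → ℕ, (∑ i, r i * n i = s) ∧ ∑ i, r i = k} :=
    ⟨r, hr, rfl⟩
  exact Nat.sSup_mem ⟨_, h⟩ (ordSet_bdd n hn s)

end Aux

theorem stmt18 {b : ℕ} [NeZero b] (n : Fin b → ℕ) (hmin : MinGen n)
    (x c : ℕ) (hc : 0 < c) (hx : Torsion n x) (r sc : Fin b → ℕ)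
    (hr : IsMaxExpr n x r) (hsc : IsMaxExpr n (x + c * n 0) sc)
    (hgt : ord n x + c < ord n (x + c * n 0))
    (j : Fin b) (hrj : r j ≠ 0) (hscj : sc j ≠ 0)
    (x' : ℕ) (hx' : x' + n j = x) :
    Torsion n x' ∧ tord n x' ≤ c := by
  have hn : ∀ i, 0 < n i := fun i => lt_trans one_pos (hmin.2.1 i)
  -- expression of x' from r
  set r' := Function.update r j (r j - 1) with hr'def
  have hr'sum : ∑ i, r' i * n i = x' := by
    have h1 : ∑ i, r' i * n i = (r j - 1) * n j + ∑ i ∈ Finset.univ.erase j, r i * n i :=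
      sum_update_mul r n j (r j - 1)
    have h2 : ∑ i, r i * n i = r j * n j + ∑ i ∈ Finset.univ.erase j, r i * n i :=
      sum_split _ j
    have h3 : (r j - 1) * n j + n j = r j * n j := by
      have : r j - 1 + 1 = r j := Nat.succ_pred_eq_of_pos (Nat.pos_of_ne_zero hrj)
      calc (r j - 1) * n j + n j = (r j - 1 + 1) * n j := by ring
        _ = r j * n j := by rw [this]
    have := hr.1
    omega
  have hr'card : ∑ i, r' i + 1 = ∑ i, r i := by
    have h1 : ∑ i, r' i = (r j - 1) + ∑ i ∈ Finset.univ.erase j, r i := sum_update r j (r j - 1)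
    have h2 : ∑ i, r i = r j + ∑ i ∈ Finset.univ.erase j, r i := sum_split r j
    have := Nat.pos_of_ne_zero hrj
    omega
  -- expression of x' + c * n 0 from sc
  set sc' := Function.update sc j (sc j - 1) with hsc'def
  have hsc'sum : ∑ i, sc' i * n i = x' + c * n 0 := by
    have h1 : ∑ i, sc' i * n i = (sc j - 1) * n j + ∑ i ∈ Finset.univ.erase j, sc i * n i :=
      sum_update_mul sc n j (sc j - 1)
    have h2 : ∑ i, sc i * n i = sc j * n j + ∑ i ∈ Finset.univ.erase j, sc i * n i :=
      sum_split _ j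
    have h3 : (sc j - 1) * n j + n j = sc j * n j := by
      have : sc j - 1 + 1 = sc j := Nat.succ_pred_eq_of_pos (Nat.pos_of_ne_zero hscj)
      calc (sc j - 1) * n j + n j = (sc j - 1 + 1) * n j := by ring
        _ = sc j * n j := by rw [this]
    have := hsc.1
    omega
  have hsc'card : ∑ i, sc' i + 1 = ∑ i, sc i := by
    have h1 : ∑ i, sc' i = (sc j - 1) + ∑ i ∈ Finset.univ.erase j, sc i := sum_update sc j (sc j - 1)
    have h2 : ∑ i, sc i = sc j + ∑ i ∈ Finset.univ.erase j, sc i := sum_split sc j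
    have := Nat.pos_of_ne_zero hscj
    omega
  -- ord x' ≤ ord x - 1
  obtain ⟨t, ht1, ht2⟩ := ord_mem n hn x' r' hr'sum
  have htx : ∑ i, Function.update t j (t j + 1) i * n i = x := by
    have h1 : ∑ i, Function.update t j (t j + 1) i * n i
        = (t j + 1) * n j + ∑ i ∈ Finset.univ.erase j, t i * n i :=
      sum_update_mul t n j (t j + 1)
    have h2 : ∑ i, t i * n i = t j * n j + ∑ i ∈ Finset.univ.erase j, t i * n i :=
      sum_split _ j
    have h3 : (t j + 1) * n j = t j * n j + n j := by ring
    omega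
  have htcard : ∑ i, Function.update t j (t j + 1) i = ∑ i, t i + 1 := by
    have h1 : ∑ i, Function.update t j (t j + 1) i
        = (t j + 1) + ∑ i ∈ Finset.univ.erase j, t i := sum_update t j (t j + 1)
    have h2 : ∑ i, t i = t j + ∑ i ∈ Finset.univ.erase j, t i := sum_split t j
    omega
  have hordx'_le : ord n x' + 1 ≤ ord n x := by
    have := le_ord n hn x _ htx
    omega
  have hkey : ∑ i, sc' i ≤ ord n (x' + c * n 0) := le_ord n hn _ sc' hsc'sum
  have htor : ord n x' + c < ord n (x' + c * n 0) := by
    have hrx : ∑ i, r i = ord n x := hr.2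
    have hsx : ∑ i, sc i = ord n (x + c * n 0) := hsc.2
    -- ord x' + c ≤ ord x - 1 + c < ord (x + c n0) - 1 = ∑ sc' ≤ ord (x' + c n0)
    omega
  exact ⟨⟨c, hc, htor⟩, Nat.sInf_le ⟨hc, htor⟩⟩
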